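/- Let G be a sub-σ-algebra of F and let w, f : Ω → ℝ be functions with w ≥ 0 P-a.e. and f ≥ 0 P-a.e., such that w and f·w are integrable. Then the measure P.withDensity(ω ↦ ENNReal.ofReal(E[f·w | G](ω))) is absolutely continuous with respect to the measure P.withDensity(ω ↦ ENNReal.ofReal(E[w | G](ω))). Equivalently: every measurable set on which E[w|G] integrates to zero is a set on which E[f·w|G] integrates to zero. -/

import Mathlib

/-! The density `E[w | G]⁺` vanishes exactly on the `G`-measurable set `A = {E[w | G] ≤ 0}`.
Since `∫_A w = ∫_A E[w | G] ≤ 0` and `w ≥ 0`, `w` vanishes a.e. on `A`; hence so does `f w`, and,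
`A` being `G`-measurable, so does `E[f w | G]`. -/

open MeasureTheory

namespace MeasureTheory

variable {α : Type*} {m m₀ : MeasurableSpace α} {μ : Measure α}

theorem withDensity_absolutelyContinuous_withDensity {f g : α → ENNReal}
    (hg : AEMeasurable g μ) (hfg : ∀ᵐ x ∂μ, g x = 0 → f x = 0) :
    μ.withDensity f ≪ μ.withDensity g := by
  refine Measure.AbsolutelyContinuous.mk fun s hs hgs => ?_
  rw [withDensity_apply _ hs] at hgs ⊢
  have hg_zero : ∀ᵐ x ∂μ.restrict s, g x = 0 := (lintegral_eq_zero_iff' hg.restrict).mp hgs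
  have hf_zero : f =ᵐ[μ.restrict s] 0 := by
    filter_upwards [hg_zero, ae_restrict_of_ae hfg] with x hgx hx using hx hgx
  rw [lintegral_congr_ae hf_zero, lintegral_zero_fun]

theorem ae_eq_zero_restrict_setOf_condExp_nonpos (hm : m ≤ m₀) [SigmaFinite (μ.trim hm)]
    {f : α → ℝ} (hf0 : 0 ≤ᵐ[μ] f) (hf : Integrable f μ) :
    f =ᵐ[μ.restrict {x | μ[f | m] x ≤ 0}] 0 := by
  set A := {x | μ[f | m] x ≤ 0}
  have hA : MeasurableSet[m] A :=
    measurableSet_le stronglyMeasurable_condExp.measurable measurable_const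
  have hf0A : 0 ≤ᵐ[μ.restrict A] f := ae_restrict_of_ae hf0
  have hint : ∫ x in A, f x ∂μ = 0 := by
    refine le_antisymm ?_ (integral_nonneg_of_ae hf0A)
    rw [← setIntegral_condExp hm hf hA]
    exact setIntegral_nonpos (hm A hA) fun _ hx => hx
  exact (integral_eq_zero_iff_of_nonneg_ae hf0A hf.restrict).mp hint

end MeasureTheory

theorem stmt_5 {Ω : Type*} {mΩ : MeasurableSpace Ω} {P : Measure Ω} [IsProbabilityMeasure P]
    (G : MeasurableSpace Ω) (hG : G ≤ mΩ)
    (w f : Ω → ℝ)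
    (hw0 : 0 ≤ᵐ[P] w)
    (hwint : Integrable w P) :
    (P.withDensity fun ω => ENNReal.ofReal ((P[fun ω' => f ω' * w ω' | G]) ω))
      ≪ (P.withDensity fun ω => ENNReal.ofReal ((P[w | G]) ω)) := by
  set A := {ω | P[w | G] ω ≤ 0}
  have hA : MeasurableSet[G] A :=
    measurableSet_le stronglyMeasurable_condExp.measurable measurable_const
  have hw : w =ᵐ[P.restrict A] 0 := ae_eq_zero_restrict_setOf_condExp_nonpos hG hw0 hwint
  have hfw : (fun ω => f ω * w ω) =ᵐ[P.restrict A] 0 := by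
    filter_upwards [hw] with ω hω
    simp [hω]
  have hcond : ∀ᵐ ω ∂P, ω ∈ A → P[fun ω' => f ω' * w ω' | G] ω = 0 :=
    (ae_restrict_iff' (hG A hA)).mp (condExp_ae_eq_restrict_zero hA hfw)
  refine withDensity_absolutelyContinuous_withDensity
    (stronglyMeasurable_condExp.measurable.mono hG le_rfl).ennreal_ofReal.aemeasurable ?_
  filter_upwards [hcond] with ω hω hwω
  rw [hω (ENNReal.ofReal_eq_zero.mp hwω), ENNReal.ofReal_zero]
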